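/- arXiv:2104.09706 — 3 statements merged into one kernel-verified Lean document; each statement's English description precedes it below -/
import Mathlib

section
/- Among all connected graphs on n vertices (n >= 3) with unit edge resistances in which the edge ab is not a cut-edge, the quantity R'_{ab} - R_{ab} (the increase in effective resistance between the endpoints a and b upon deleting the edge ab) attains its maximum value (n-1)^2/n for the n-cycle C_n. -/
open Finset

section Defs

variable {V : Type*} [Fintype V]

noncomputable def condAt (c : V → V → ℝ) (x : V) : ℝ := ∑ y, c x y

/-- Transition probabilities of the random walk induced by conductances `c`. -/
noncomputable def step (c : V → V → ℝ) (x y : V) : ℝ := c x y / condAt c x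

open scoped Classical in
/-- `surv P b n a` is the probability that the walk with transition matrix `P`
started at `a` has not visited `b` by time `n`. -/
noncomputable def surv (P : V → V → ℝ) (b : V) : ℕ → V → ℝ
  | 0 => fun a => if a = b then 0 else 1
  | n + 1 => fun a => if a = b then 0 else ∑ y, P a y * surv P b n y

/-- Expected hitting time of `b` starting from `a`, as the sum over `n` of the
survival probabilities `P(T_b > n)`. -/
noncomputable def hitTime (P : V → V → ℝ) (a b : V) : ℝ := ∑' n, surv P b n a

/-- Expected return time to `z` : one step plus the expected hitting time of `z`
from the position after the first step. -/
noncomputable def returnTime (P : V → V → ℝ) (z : V) : ℝ :=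
  1 + ∑ y, P z y * hitTime P y z

/-- Dirichlet energy of a potential `f` for conductances `c`. -/
noncomputable def energy (c : V → V → ℝ) (f : V → ℝ) : ℝ :=
  (1 / 2) * ∑ x, ∑ y, c x y * (f x - f y) ^ 2

/-- Effective resistance between `a` and `b` (Dirichlet principle): the
reciprocal of the minimal Dirichlet energy among potentials with
`f a = 1`, `f b = 0`. -/
noncomputable def effRes (c : V → V → ℝ) (a b : V) : ℝ :=
  1 / sInf {E : ℝ | ∃ f : V → ℝ, f a = 1 ∧ f b = 0 ∧ E = energy c f}

end Defs

open scoped Classical in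
/-- Unit conductances on the edges of a simple graph. -/
noncomputable def gw {V : Type*} (G : SimpleGraph V) (x y : V) : ℝ :=
  if G.Adj x y then 1 else 0

noncomputable def numEdges {V : Type*} (G : SimpleGraph V) : ℕ := G.edgeSet.ncard

/-! Deleting the edge `ab` lowers the effective conductance between `a` and `b` by exactly one,
since the edge adds `(f a - f b) ^ 2 = 1` to the energy of every admissible potential. So if `C'`
is the conductance of `G - ab`, then `R'_{ab} - R_{ab} = 1/C' - 1/(C' + 1) = 1/(C'(C' + 1))`,
which decreases in `C'`. Any `a`–`b` path in `G - ab` has at most `n - 1` edges, and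
Cauchy–Schwarz along it gives `C' ≥ 1/(n - 1)`, whence the bound. Cutting `C_n` open at an edge
leaves a path on `n` vertices, on which the linear potential attains `C' = 1/(n - 1)`. -/

open SimpleGraph

lemma antitoneOn_one_div_sub_one_div_add_one :
    AntitoneOn (fun t : ℝ => 1 / t - 1 / (t + 1)) (Set.Ioi 0) := by
  intro s (hs : 0 < s) t (ht : 0 < t) hst
  have key : ∀ u : ℝ, 0 < u → 1 / u - 1 / (u + 1) = 1 / (u * (u + 1)) := fun u hu => by
    field_simp
    ring
  simp only [key t ht, key s hs]
  gcongr

lemma Fin.sum_succ_sub_castSucc {M : Type*} [AddCommGroup M] {m : ℕ} (f : Fin (m + 1) → M) :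
    ∑ i : Fin m, (f i.succ - f i.castSucc) = f (Fin.last m) - f 0 := by
  induction m with
  | zero => simp
  | succ m ih =>
    rw [Fin.sum_univ_castSucc]
    simp only [Fin.succ_castSucc]
    rw [ih (fun i => f i.castSucc)]
    simp

lemma sum_comp_le_sum_of_injective {ι κ M : Type*} [Fintype ι] [Fintype κ] [AddCommMonoid M]
    [PartialOrder M] [IsOrderedAddMonoid M] {e : ι → κ} (he : e.Injective) {F : κ → M}
    (hF : ∀ k, 0 ≤ F k) : ∑ i, F (e i) ≤ ∑ k, F k :=
  (sum_map univ ⟨e, he⟩ F).symm.trans_le (sum_le_univ_sum_of_nonneg hF)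

section Conductance

variable {V : Type*} [Fintype V]

noncomputable def effCond (c : V → V → ℝ) (a b : V) : ℝ :=
  sInf {E : ℝ | ∃ f : V → ℝ, f a = 1 ∧ f b = 0 ∧ E = energy c f}

lemma effRes_eq_one_div_effCond (c : V → V → ℝ) (a b : V) :
    effRes c a b = 1 / effCond c a b := rfl

lemma energy_one_sub (c : V → V → ℝ) (f : V → ℝ) :
    energy c (fun x => 1 - f x) = energy c f := by
  unfold energy
  congr 1
  refine Finset.sum_congr rfl fun x _ => Finset.sum_congr rfl fun y _ => ?_
  ring

lemma effCond_comm (c : V → V → ℝ) (a b : V) : effCond c a b = effCond c b a := by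
  unfold effCond
  congr 1
  ext E
  constructor <;> rintro ⟨f, h1, h0, rfl⟩ <;>
    exact ⟨fun x => 1 - f x, by simp [h0], by simp [h1], (energy_one_sub c f).symm⟩

lemma energy_nonneg {c : V → V → ℝ} (hc : ∀ x y, 0 ≤ c x y) (f : V → ℝ) : 0 ≤ energy c f := by
  unfold energy
  exact mul_nonneg (by norm_num) <| Finset.sum_nonneg fun x _ =>
    Finset.sum_nonneg fun y _ => mul_nonneg (hc x y) (sq_nonneg _)

lemma effCond_le_energy {c : V → V → ℝ} (hc : ∀ x y, 0 ≤ c x y) {a b : V} {f : V → ℝ}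
    (ha : f a = 1) (hb : f b = 0) : effCond c a b ≤ energy c f :=
  csInf_le ⟨0, by rintro _ ⟨g, -, -, rfl⟩; exact energy_nonneg hc g⟩ ⟨f, ha, hb, rfl⟩

lemma le_effCond {c : V → V → ℝ} {a b : V} (hab : a ≠ b) {t : ℝ}
    (h : ∀ f : V → ℝ, f a = 1 → f b = 0 → t ≤ energy c f) : t ≤ effCond c a b := by
  classical
  refine le_csInf ⟨_, Pi.single a 1, by simp, by simp [hab.symm], rfl⟩ ?_
  rintro _ ⟨f, ha, hb, rfl⟩
  exact h f ha hb

end Conductance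

section Graph

variable {V W : Type*}

lemma gw_nonneg (G : SimpleGraph V) (x y : V) : 0 ≤ gw G x y := by
  unfold gw
  split <;> norm_num

lemma gw_le_gw_map {H : SimpleGraph W} {G : SimpleGraph V} (φ : H →g G) (x y : W) :
    gw H x y ≤ gw G (φ x) (φ y) := by
  unfold gw
  split_ifs with hH hG
  · rfl
  · exact absurd (φ.map_adj hH) hG
  · norm_num
  · rfl

lemma gw_deleteEdges_add [DecidableEq V] {G : SimpleGraph V} {a b : V} (hab : G.Adj a b)
    (x y : V) : gw G x y = gw (G.deleteEdges {s(a, b)}) x y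
      + (if x = a ∧ y = b then 1 else 0) + (if x = b ∧ y = a then 1 else 0) := by
  by_cases h : s(x, y) = s(a, b)
  · obtain ⟨rfl, rfl⟩ | ⟨rfl, rfl⟩ := Sym2.eq_iff.1 h
    · simp [gw, hab, hab.ne]
    · simp [gw, hab.symm, hab.ne]
  · have hxy : ¬(x = a ∧ y = b) ∧ ¬(x = b ∧ y = a) := by
      rw [Sym2.eq_iff] at h
      tauto
    have hdel : (G.deleteEdges {s(a, b)}).Adj x y ↔ G.Adj x y := by simp [h]
    simp only [gw, hxy.1, hxy.2, if_false, add_zero]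
    split_ifs <;> tauto

variable [Fintype V] [Fintype W]

lemma energy_gw_deleteEdges_add {G : SimpleGraph V} {a b : V} (hab : G.Adj a b) (f : V → ℝ) :
    energy (gw G) f = energy (gw (G.deleteEdges {s(a, b)})) f + (f a - f b) ^ 2 := by
  classical
  simp only [energy, gw_deleteEdges_add hab, ite_and, add_mul, ite_mul, one_mul, zero_mul,
    sum_add_distrib, sum_ite_irrel, sum_ite_eq', mem_univ, if_true, sum_const_zero]
  ring

lemma effCond_gw_eq_deleteEdges_add_one {G : SimpleGraph V} {a b : V} (hab : G.Adj a b) :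
    effCond (gw G) a b = effCond (gw (G.deleteEdges {s(a, b)})) a b + 1 := by
  have henergy : ∀ f : V → ℝ, f a = 1 → f b = 0 →
      energy (gw G) f = energy (gw (G.deleteEdges {s(a, b)})) f + 1 := by
    intro f ha hb
    rw [energy_gw_deleteEdges_add hab, ha, hb]
    norm_num
  apply le_antisymm
  · rw [← sub_le_iff_le_add]
    refine le_effCond hab.ne fun f ha hb => ?_
    rw [sub_le_iff_le_add, ← henergy f ha hb]
    exact effCond_le_energy (gw_nonneg G) ha hb
  · refine le_effCond hab.ne fun f ha hb => ?_
    rw [henergy f ha hb]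
    exact add_le_add_left (effCond_le_energy (gw_nonneg _) ha hb) 1

lemma effRes_deleteEdges_sub_effRes {G : SimpleGraph V} {a b : V} (hab : G.Adj a b) :
    effRes (gw (G.deleteEdges {s(a, b)})) a b - effRes (gw G) a b
      = 1 / effCond (gw (G.deleteEdges {s(a, b)})) a b
        - 1 / (effCond (gw (G.deleteEdges {s(a, b)})) a b + 1) := by
  rw [effRes_eq_one_div_effCond, effRes_eq_one_div_effCond,
    effCond_gw_eq_deleteEdges_add_one hab]

lemma energy_comp_copy_le {H : SimpleGraph W} {G : SimpleGraph V} (φ : Copy H G) (f : V → ℝ) :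
    energy (gw H) (f ∘ φ) ≤ energy (gw G) f := by
  have hterm : ∀ u v, 0 ≤ gw G u v * (f u - f v) ^ 2 := fun u v =>
    mul_nonneg (gw_nonneg G u v) (sq_nonneg _)
  unfold energy
  gcongr
  calc ∑ x, ∑ y, gw H x y * (f (φ x) - f (φ y)) ^ 2
      ≤ ∑ x, ∑ y, gw G (φ x) (φ y) * (f (φ x) - f (φ y)) ^ 2 := by
        gcongr with x _ y _
        exact gw_le_gw_map φ.toHom x y
    _ ≤ ∑ x, ∑ v, gw G (φ x) v * (f (φ x) - f v) ^ 2 := by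
        gcongr with x _
        exact sum_comp_le_sum_of_injective φ.injective fun v => hterm _ v
    _ ≤ ∑ u, ∑ v, gw G u v * (f u - f v) ^ 2 :=
        sum_comp_le_sum_of_injective φ.injective fun u => sum_nonneg fun v _ => hterm u v

lemma energy_gw_comp_iso {G : SimpleGraph V} {G' : SimpleGraph W} (e : G ≃g G') (f : W → ℝ) :
    energy (gw G) (f ∘ e) = energy (gw G') f := by
  refine le_antisymm (energy_comp_copy_le e.toCopy f) ?_
  simpa [Function.comp_def] using energy_comp_copy_le e.symm.toCopy (f ∘ e)

lemma effCond_gw_iso {G : SimpleGraph V} {G' : SimpleGraph W} (e : G ≃g G') (a b : V) :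
    effCond (gw G') (e a) (e b) = effCond (gw G) a b := by
  unfold effCond
  congr 1
  ext E
  constructor
  · rintro ⟨f, ha, hb, rfl⟩
    exact ⟨f ∘ e, ha, hb, (energy_gw_comp_iso e f).symm⟩
  · rintro ⟨g, ha, hb, rfl⟩
    refine ⟨g ∘ e.symm, by simpa using ha, by simpa using hb, ?_⟩
    rw [← energy_gw_comp_iso e]
    simp [Function.comp_def]

end Graph

lemma energy_gw_pathGraph {m : ℕ} (f : Fin (m + 1) → ℝ) :
    energy (gw (pathGraph (m + 1))) f = ∑ i : Fin m, (f i.succ - f i.castSucc) ^ 2 := by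
  have hgw : ∀ x y, gw (pathGraph (m + 1)) x y
      = (if x.val + 1 = y.val then 1 else 0) + (if y.val + 1 = x.val then 1 else 0) := by
    intro x y
    unfold gw
    rw [pathGraph_adj]
    split_ifs <;> norm_num <;> omega
  have hsucc : ∀ (i : Fin m) (y : Fin (m + 1)), (i : ℕ) + 1 = y ↔ y = i.succ := by
    simp [Fin.ext_iff, eq_comm]
  have hlast : ∀ y : Fin (m + 1), ¬m + 1 = y := fun y => by omega
  have hforward : ∑ x, ∑ y, (if x.val + 1 = y.val then (1 : ℝ) else 0) * (f x - f y) ^ 2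
      = ∑ i : Fin m, (f i.succ - f i.castSucc) ^ 2 := by
    rw [Fin.sum_univ_castSucc]
    simp only [Fin.val_castSucc, hsucc, ite_mul, one_mul, zero_mul, sum_ite_eq', mem_univ,
      if_true, Fin.val_last, hlast, if_false, sum_const_zero, add_zero]
    exact Finset.sum_congr rfl fun i _ => sub_sq_comm _ _
  have hbackward : ∑ x, ∑ y, (if y.val + 1 = x.val then (1 : ℝ) else 0) * (f x - f y) ^ 2
      = ∑ x, ∑ y, (if x.val + 1 = y.val then (1 : ℝ) else 0) * (f x - f y) ^ 2 := by
    rw [Finset.sum_comm]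
    exact Finset.sum_congr rfl fun x _ => Finset.sum_congr rfl fun y _ => by rw [sub_sq_comm]
  simp only [energy, hgw, add_mul, sum_add_distrib, hbackward, hforward]
  ring

section LowerBound

variable {V : Type*} [Fintype V]

lemma sq_sub_le_length_mul_energy {G : SimpleGraph V} {a b : V} {p : G.Walk a b}
    (hp : p.IsPath) (f : V → ℝ) : (f a - f b) ^ 2 ≤ p.length * energy (gw G) f := by
  classical
  set g := f ∘ hp.pathGraphCopy
  have hstart : g 0 = f a := by
    show f p.support[0] = f a
    rw [p.support_getElem_zero]
  have hend : g (Fin.last p.length) = f b := by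
    show f p.support[p.length] = f b
    rw [p.support_getElem_length]
  calc (f a - f b) ^ 2 = (∑ i : Fin p.length, (g i.succ - g i.castSucc)) ^ 2 := by
        rw [Fin.sum_succ_sub_castSucc, hstart, hend, sub_sq_comm]
    _ ≤ p.length * ∑ i : Fin p.length, (g i.succ - g i.castSucc) ^ 2 := by
        simpa using sq_sum_le_card_mul_sum_sq (s := univ)
          (f := fun i : Fin p.length => g i.succ - g i.castSucc)
    _ = p.length * energy (gw (pathGraph (p.length + 1))) g := by rw [energy_gw_pathGraph]
    _ ≤ p.length * energy (gw G) f := by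
        gcongr
        exact energy_comp_copy_le _ f

lemma one_div_card_sub_one_le_effCond {G : SimpleGraph V} {a b : V} (hreach : G.Reachable a b)
    (hab : a ≠ b) : 1 / ((Fintype.card V : ℝ) - 1) ≤ effCond (gw G) a b := by
  classical
  obtain ⟨p, hp⟩ := hreach.some.toPath
  have hlen_pos : 0 < (p.length : ℝ) := by
    exact_mod_cast Nat.pos_of_ne_zero fun h => hab (p.eq_of_length_eq_zero h)
  have hlen_le : (p.length : ℝ) ≤ Fintype.card V - 1 := by
    rw [le_sub_iff_add_le]
    exact_mod_cast hp.length_lt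
  refine le_effCond hab fun f ha hb => ?_
  have hpath := sq_sub_le_length_mul_energy hp f
  rw [ha, hb] at hpath
  calc 1 / ((Fintype.card V : ℝ) - 1) ≤ 1 / p.length := by gcongr
    _ ≤ energy (gw G) f := by
        rw [div_le_iff₀ hlen_pos]
        linarith

end LowerBound

section Cycle

variable {m : ℕ}

lemma cycleGraph_deleteEdges_neg_one_zero (hm : 2 ≤ m) :
    (cycleGraph (m + 1)).deleteEdges {s(-1, 0)} = pathGraph (m + 1) := by
  ext u v
  rw [deleteEdges_adj, cycleGraph_adj', pathGraph_adj, Set.mem_singleton_iff, Sym2.eq_iff]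
  simp only [Fin.ext_iff, Fin.coe_neg_one, Fin.val_zero]
  have hu := u.isLt
  have hv := v.isLt
  rcases lt_trichotomy u v with h | rfl | h
  · rw [Fin.coe_sub_iff_lt.2 h, Fin.coe_sub_iff_le.2 h.le]
    rw [Fin.lt_def] at h
    omega
  · simp
  · rw [Fin.coe_sub_iff_lt.2 h, Fin.coe_sub_iff_le.2 h.le]
    rw [Fin.lt_def] at h
    omega

lemma cycleGraph_adj_sub_right (x y b : Fin (m + 1)) :
    (cycleGraph (m + 1)).Adj (x - b) (y - b) ↔ (cycleGraph (m + 1)).Adj x y := by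
  simp only [cycleGraph_adj', sub_sub_sub_cancel_right]

def cycleGraphDeleteEdgeIsoPathGraph (hm : 2 ≤ m) (b : Fin (m + 1)) :
    (cycleGraph (m + 1)).deleteEdges {s(b - 1, b)} ≃g pathGraph (m + 1) where
  toEquiv := Equiv.subRight b
  map_rel_iff' {x y} := by
    have hedge : s(x - b, y - b) = s(-1, 0) ↔ s(x, y) = s(b - 1, b) := by
      simp only [Sym2.eq_iff, sub_eq_iff_eq_add, zero_add, neg_add_eq_sub]
    rw [← cycleGraph_deleteEdges_neg_one_zero hm]
    simp only [Equiv.subRight_apply, deleteEdges_adj, Set.mem_singleton_iff,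
      cycleGraph_adj_sub_right, hedge]

lemma effCond_pathGraph_neg_one_zero (hm : 0 < m) :
    effCond (gw (pathGraph (m + 1))) (-1) 0 = 1 / m := by
  have hm' : (0 : ℝ) < m := by exact_mod_cast hm
  apply le_antisymm
  · have ha : ((-1 : Fin (m + 1)) : ℕ) / (m : ℝ) = 1 := by
      rw [Fin.coe_neg_one]
      exact div_self hm'.ne'
    refine (effCond_le_energy (gw_nonneg _) (f := fun i : Fin (m + 1) => (i : ℝ) / m) ha
      (by simp)).trans_eq ?_
    simp only [energy_gw_pathGraph, Fin.val_succ, Fin.val_castSucc, Nat.cast_add, Nat.cast_one,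
      add_div, add_sub_cancel_left, sum_const, card_univ, Fintype.card_fin, nsmul_eq_mul]
    field_simp
  · have hne : (-1 : Fin (m + 1)) ≠ 0 := by
      rw [Ne, Fin.ext_iff, Fin.coe_neg_one]
      simp only [Fin.coe_ofNat_eq_mod, Nat.zero_mod]
      omega
    simpa using one_div_card_sub_one_le_effCond ((pathGraph_connected m).preconnected _ _) hne

lemma effCond_cycleGraph_deleteEdges_sub_one (hm : 2 ≤ m) (b : Fin (m + 1)) :
    effCond (gw ((cycleGraph (m + 1)).deleteEdges {s(b - 1, b)})) (b - 1) b = 1 / m := by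
  rw [← effCond_gw_iso (cycleGraphDeleteEdgeIsoPathGraph hm b)]
  simpa [cycleGraphDeleteEdgeIsoPathGraph] using effCond_pathGraph_neg_one_zero (by omega)

lemma effCond_cycleGraph_deleteEdges (hm : 2 ≤ m) {a b : Fin (m + 1)}
    (hab : (cycleGraph (m + 1)).Adj a b) :
    effCond (gw ((cycleGraph (m + 1)).deleteEdges {s(a, b)})) a b = 1 / m := by
  have hone : ((1 : Fin (m + 1)) : ℕ) = 1 := by rw [Fin.val_one', Nat.mod_eq_of_lt (by omega)]
  have hpred : ∀ x y : Fin (m + 1), (x - y : Fin (m + 1)).val = 1 → y = x - 1 := fun x y h =>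
    eq_sub_of_add_eq (sub_eq_iff_eq_add'.1 (Fin.ext (h.trans hone.symm))).symm
  rcases cycleGraph_adj'.1 hab with h | h
  · obtain rfl := hpred a b h
    rw [Sym2.eq_swap, effCond_comm]
    exact effCond_cycleGraph_deleteEdges_sub_one hm a
  · obtain rfl := hpred b a h
    exact effCond_cycleGraph_deleteEdges_sub_one hm b

end Cycle

/-- Over all connected graphs on `n` vertices in which the edge `ab` is not a
cut-edge, the increase `R'_{ab} - R_{ab}` of effective resistance upon deleting
the edge `ab` is at most `(n-1)^2/n`, with equality attained by the `n`-cycle. -/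
theorem effRes_increase_max (n : ℕ) (hn : 3 ≤ n) :
    (∀ (V : Type) [Fintype V], Fintype.card V = n →
      ∀ (G : SimpleGraph V), G.Connected → ∀ a b : V, G.Adj a b →
        (G.deleteEdges {s(a, b)}).Connected →
        effRes (gw (G.deleteEdges {s(a, b)})) a b - effRes (gw G) a b
          ≤ ((n : ℝ) - 1) ^ 2 / n) ∧
    (∀ a b : Fin n, (SimpleGraph.cycleGraph n).Adj a b →
      effRes (gw ((SimpleGraph.cycleGraph n).deleteEdges {s(a, b)})) a b
        - effRes (gw (SimpleGraph.cycleGraph n)) a b = ((n : ℝ) - 1) ^ 2 / n) := by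
  obtain ⟨m, rfl⟩ : ∃ m, n = m + 1 := ⟨n - 1, by omega⟩
  have hm_pos : (0 : ℝ) < m := by exact_mod_cast (by omega : 0 < m)
  have hvalue :
      1 / (1 / (m : ℝ)) - 1 / (1 / m + 1) = (((m + 1 : ℕ) : ℝ) - 1) ^ 2 / (m + 1 : ℕ) := by
    push_cast
    field_simp
    ring
  refine ⟨fun V _ hcard G _ a b hab hconn => ?_, fun a b hab => ?_⟩
  · rw [effRes_deleteEdges_sub_effRes hab, ← hvalue]
    have hC := one_div_card_sub_one_le_effCond (hconn.preconnected a b) hab.ne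
    rw [hcard, Nat.cast_add_one, add_sub_cancel_right] at hC
    have hm_inv : (0 : ℝ) < 1 / m := by positivity
    exact antitoneOn_one_div_sub_one_div_add_one hm_inv (hm_inv.trans_le hC) hC
  · rw [effRes_deleteEdges_sub_effRes hab, effCond_cycleGraph_deleteEdges (by omega) hab, hvalue]
end

section
/- If ab is an edge of a connected graph G on n vertices that is not a cut-edge, then the effective resistance between a and b in G (with unit edge resistances) is at most (n-1)/n, with equality for the n-cycle C_n. -/
open Finset

/-!
Fix a potential `f` with `f a = 1` and `f b = 0`. Since `ab` is not a bridge, some path from `b`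
to `a` avoids `ab`; it has length `k ≤ n - 1`, and together with `ab` it forms a trail. The energy
of `f` is therefore at least `1` (the edge `ab`) plus the energy along the path, which is at least
`1 / k` by Cauchy–Schwarz. So every admissible energy is at least `n / (n - 1)` and
`R_ab ≤ (n - 1) / n`. On `C_n`, rotations carry every edge to `(n - 1, 0)`, and there the linear
potential `x / (n - 1)` has energy exactly `n / (n - 1)`.
-/

def sqDrop {V : Type*} (f : V → ℝ) : Sym2 V → ℝ :=
  Sym2.lift ⟨fun x y => (f x - f y) ^ 2, fun x y => by ring⟩

@[simp]
lemma sqDrop_mk {V : Type*} (f : V → ℝ) (x y : V) : sqDrop f s(x, y) = (f x - f y) ^ 2 := rfl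

lemma sqDrop_nonneg {V : Type*} (f : V → ℝ) (e : Sym2 V) : 0 ≤ sqDrop f e := by
  induction e using Sym2.ind with
  | _ x y => exact sq_nonneg _

section EffRes

variable {V W : Type*} [Fintype V] [Fintype W]

lemma energy_comp_equiv (e : V ≃ W) (c : W → W → ℝ) (f : W → ℝ) :
    energy (fun x y => c (e x) (e y)) (f ∘ e) = energy c f := by
  simp only [energy, Function.comp_apply]
  rw [← e.sum_comp]
  simp_rw [← e.sum_comp (fun y => c _ y * (f _ - f y) ^ 2)]

lemma effRes_comp_equiv (e : V ≃ W) (c : W → W → ℝ) (a b : V) :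
    effRes (fun x y => c (e x) (e y)) a b = effRes c (e a) (e b) := by
  have hset :
      {E : ℝ | ∃ f : V → ℝ, f a = 1 ∧ f b = 0 ∧ E = energy (fun x y => c (e x) (e y)) f} =
      {E : ℝ | ∃ f : W → ℝ, f (e a) = 1 ∧ f (e b) = 0 ∧ E = energy c f} := by
    ext E
    constructor
    · rintro ⟨f, hfa, hfb, rfl⟩
      refine ⟨f ∘ e.symm, by simpa using hfa, by simpa using hfb, ?_⟩
      rw [← energy_comp_equiv e, Function.comp_assoc, e.symm_comp_self, Function.comp_id]
    · rintro ⟨f, hfa, hfb, rfl⟩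
      exact ⟨f ∘ e, hfa, hfb, (energy_comp_equiv e c f).symm⟩
  rw [effRes, effRes, hset]

lemma effRes_comm (c : V → V → ℝ) (a b : V) : effRes c a b = effRes c b a := by
  have hsub : ∀ u v : V,
      {E : ℝ | ∃ f : V → ℝ, f u = 1 ∧ f v = 0 ∧ E = energy c f} ⊆
      {E : ℝ | ∃ f : V → ℝ, f v = 1 ∧ f u = 0 ∧ E = energy c f} := by
    rintro u v E ⟨f, hfu, hfv, rfl⟩
    refine ⟨fun x => 1 - f x, by simp [hfv], by simp [hfu], ?_⟩
    simp only [energy, sub_sub_sub_cancel_left]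
    congr 1
    exact sum_congr rfl fun x _ => sum_congr rfl fun y _ => by ring
  rw [effRes, effRes, (hsub a b).antisymm (hsub b a)]

lemma effRes_le_of_forall_le_energy {c : V → V → ℝ} {a b : V} (hab : a ≠ b) {m : ℝ}
    (hm : 0 < m) (h : ∀ f : V → ℝ, f a = 1 → f b = 0 → m ≤ energy c f) : effRes c a b ≤ 1 / m := by
  classical
  refine one_div_le_one_div_of_le hm (le_csInf ?_ ?_)
  · exact ⟨_, fun x => if x = a then 1 else 0, by simp, by simp [hab.symm], rfl⟩
  · rintro _ ⟨f, hfa, hfb, rfl⟩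
    exact h f hfa hfb

end EffRes

namespace SimpleGraph

section

variable {V : Type*} [Fintype V] (G : SimpleGraph V) [DecidableRel G.Adj]

lemma sum_dart_edge {M : Type*} [AddCommMonoid M] (g : Sym2 V → M) :
    ∑ d : G.Dart, g d.edge = 2 • ∑ e ∈ G.edgeFinset, g e := by
  classical
  rw [← sum_fiberwise_of_maps_to' (t := G.edgeFinset) (fun d _ => mem_edgeFinset.2 d.edge_mem),
    smul_sum]
  refine sum_congr rfl fun e he => ?_
  rw [sum_const, G.dart_edge_fiber_card e (mem_edgeFinset.1 he)]

lemma sum_sum_ite_adj_eq_sum_dart {M : Type*} [AddCommMonoid M] (h : V × V → M) :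
    ∑ x, ∑ y, (if G.Adj x y then h (x, y) else 0) = ∑ d : G.Dart, h d.toProd := by
  rw [← Fintype.sum_prod_type', ← sum_filter]
  exact sum_bij' (fun p hp => ⟨p, (mem_filter.1 hp).2⟩) (fun d _ => d.toProd)
    (by simp) (by simp) (by simp) (by simp) (by simp)

lemma energy_gw_eq_sum_edgeFinset (f : V → ℝ) :
    energy (gw G) f = ∑ e ∈ G.edgeFinset, sqDrop f e := by
  have hdarts : ∑ x, ∑ y, gw G x y * (f x - f y) ^ 2 = ∑ d : G.Dart, sqDrop f d.edge := by
    refine Eq.trans ?_ (G.sum_sum_ite_adj_eq_sum_dart fun p : V × V => sqDrop f s(p.1, p.2))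
    simp [gw]
  rw [energy, hdarts, sum_dart_edge, nsmul_eq_mul]
  ring

lemma energy_gw_eq_sum_neighborFinset (f : V → ℝ) :
    energy (gw G) f = 1 / 2 * ∑ x, ∑ y ∈ G.neighborFinset x, (f x - f y) ^ 2 := by
  simp [energy, gw, neighborFinset_eq_filter, sum_filter]

end

lemma sq_sub_le_length_mul_sum_edges_sqDrop {V : Type*} {G : SimpleGraph V} {u v : V}
    (p : G.Walk u v) (f : V → ℝ) :
    (f u - f v) ^ 2 ≤ p.length * (p.edges.map (sqDrop f)).sum := by
  induction p with
  | nil => simp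
  | @cons u w v h q ih =>
    simp only [Walk.length_cons, Walk.edges_cons, List.map_cons, List.sum_cons, sqDrop_mk]
    push_cast
    rcases Nat.eq_zero_or_pos q.length with hq | hq
    · obtain rfl := q.eq_of_length_eq_zero hq
      have : 0 ≤ (q.edges.map (sqDrop f)).sum := List.sum_nonneg (by simp [sqDrop_nonneg])
      nlinarith
    · have hk : (0 : ℝ) < q.length := by exact_mod_cast hq
      -- with `x = f u - f w`, `y = f w - f v`, `S` the sum along `q` and `k = q.length`:
      -- `k ((k + 1) (x² + S) - (x + y)²) = (k x - y)² + (k + 1) (k S - y²)`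
      nlinarith [sq_nonneg (q.length * (f u - f w) - (f w - f v)),
        mul_nonneg hk.le (sub_nonneg.2 ih)]

section NonBridge

variable {V : Type*} [Fintype V] {G : SimpleGraph V} {a b : V}

lemma sum_edges_sqDrop_le_energy {u v : V} {p : G.Walk u v} (hp : p.IsTrail) (f : V → ℝ) :
    (p.edges.map (sqDrop f)).sum ≤ energy (gw G) f := by
  classical
  rw [energy_gw_eq_sum_edgeFinset, ← List.sum_toFinset _ hp.edges_nodup]
  exact sum_le_sum_of_subset_of_nonneg
    (fun e he => mem_edgeFinset.2 (p.edges_subset_edgeSet (List.mem_toFinset.1 he)))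
    (fun e _ _ => sqDrop_nonneg f e)

lemma sq_sub_mul_le_energy_of_isTrail_cons (hab : G.Adj a b) {p : G.Walk b a}
    (hp : (Walk.cons hab p).IsTrail) (f : V → ℝ) :
    (f a - f b) ^ 2 * (1 + (p.length : ℝ)⁻¹) ≤ energy (gw G) f := by
  have hbound := sum_edges_sqDrop_le_energy hp f
  simp only [Walk.edges_cons, List.map_cons, List.sum_cons, sqDrop_mk] at hbound
  have hpath : (f a - f b) ^ 2 / p.length ≤ (p.edges.map (sqDrop f)).sum := by
    refine div_le_of_le_mul₀ (Nat.cast_nonneg _)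
      (List.sum_nonneg (by simp [sqDrop_nonneg])) ?_
    rw [sub_sq_comm, mul_comm]
    exact sq_sub_le_length_mul_sum_edges_sqDrop p f
  rw [mul_add, mul_one, ← div_eq_mul_inv]
  linarith

lemma sq_sub_mul_le_energy_of_reachable_deleteEdges (hab : G.Adj a b)
    (hreach : (G.deleteEdges {s(a, b)}).Reachable a b) (f : V → ℝ) :
    (f a - f b) ^ 2 * (Fintype.card V / (Fintype.card V - 1)) ≤ energy (gw G) f := by
  obtain ⟨q, hq⟩ := hreach.symm.exists_isPath
  set p := q.mapLe (G.deleteEdges_le {s(a, b)})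
  have hpath : p.IsPath := hq.mapLe _
  have htrail : (Walk.cons hab p).IsTrail := by
    refine Walk.isTrail_cons _ _ |>.2 ⟨hpath.isTrail, fun he => ?_⟩
    rw [Walk.edges_mapLe_eq_edges] at he
    simpa [edgeSet_deleteEdges] using q.edges_subset_edgeSet he
  have hlen : p.length + 1 ≤ Fintype.card V := hpath.length_lt
  have hpos : 0 < p.length := Nat.pos_of_ne_zero fun h => hab.ne (p.eq_of_length_eq_zero h).symm
  refine le_trans ?_ (sq_sub_mul_le_energy_of_isTrail_cons hab htrail f)
  gcongr
  have hk : (0 : ℝ) < p.length := by exact_mod_cast hpos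
  have hkV : (p.length : ℝ) ≤ Fintype.card V - 1 := by
    rw [le_sub_iff_add_le]; exact_mod_cast hlen
  rw [div_le_iff₀ (hk.trans_le hkV)]
  field_simp
  nlinarith

theorem effRes_gw_le_of_reachable_deleteEdges (hab : G.Adj a b)
    (hreach : (G.deleteEdges {s(a, b)}).Reachable a b) :
    effRes (gw G) a b ≤ (Fintype.card V - 1) / Fintype.card V := by
  have hcard : (1 : ℝ) < Fintype.card V := by
    exact_mod_cast Fintype.one_lt_card_iff.2 ⟨a, b, hab.ne⟩
  rw [← one_div_div]
  refine effRes_le_of_forall_le_energy hab.ne (div_pos (by linarith) (by linarith))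
    fun f hfa hfb => ?_
  simpa [hfa, hfb] using sq_sub_mul_le_energy_of_reachable_deleteEdges hab hreach f

end NonBridge

lemma gw_cycleGraph_add_right {n : ℕ} [NeZero n] (u v t : Fin n) :
    gw (cycleGraph n) (u + t) (v + t) = gw (cycleGraph n) u v := by
  simp only [gw, cycleGraph_adj', add_sub_add_right_eq_sub]

lemma reachable_deleteEdges_last_zero (n : ℕ) :
    ((cycleGraph (n + 3)).deleteEdges {s(Fin.last (n + 2), 0)}).Reachable (Fin.last (n + 2)) 0 := by
  refine (pathGraph_preconnected _ _ _).mono fun u v huv => ?_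
  refine deleteEdges_adj.2 ⟨pathGraph_le_cycleGraph huv, ?_⟩
  rw [pathGraph_adj] at huv
  simp only [Set.mem_singleton_iff, Sym2.eq_iff, Fin.ext_iff, Fin.val_last, Fin.val_zero]
  omega

lemma energy_cycleGraph_val_div (n : ℕ) :
    energy (gw (cycleGraph (n + 3))) (fun x => x.val / (n + 2)) = (n + 3) / (n + 2) := by
  set f : Fin (n + 3) → ℝ := fun x => x.val / (n + 2)
  have hn : (n : ℝ) + 2 ≠ 0 := by positivity
  have hne : ∀ x : Fin (n + 3), x - 1 ≠ x + 1 := by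
    intro x h
    rw [sub_eq_iff_eq_add, add_assoc, left_eq_add] at h
    have h2 := congrArg Fin.val h
    rw [Fin.val_add, Fin.val_one, Fin.val_zero, Nat.mod_eq_of_lt (by omega)] at h2
    omega
  have hstep : ∀ i : Fin (n + 2), (f i.succ - f i.castSucc) ^ 2 = 1 / (n + 2) ^ 2 := by
    intro i
    simp only [f, Fin.val_succ, Fin.val_castSucc]
    field_simp
    push_cast
    ring
  have hshift : ∑ x, (f x - f (x - 1)) ^ 2 = ∑ x, (f (x + 1) - f x) ^ 2 := by
    rw [← (Equiv.subRight 1).sum_comp (fun x => (f (x + 1) - f x) ^ 2)]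
    simp only [Equiv.subRight_apply, sub_add_cancel]
  have hflip : ∑ x, (f x - f (x + 1)) ^ 2 = ∑ x, (f (x + 1) - f x) ^ 2 :=
    sum_congr rfl fun x _ => sub_sq_comm _ _
  calc energy (gw (cycleGraph (n + 3))) f
      = 1 / 2 * ∑ x, ((f x - f (x - 1)) ^ 2 + (f x - f (x + 1)) ^ 2) := by
        rw [energy_gw_eq_sum_neighborFinset]
        simp only [cycleGraph_neighborFinset, sum_pair (hne _)]
    _ = ∑ x, (f (x + 1) - f x) ^ 2 := by
        rw [sum_add_distrib, hshift, hflip]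
        ring
    _ = (n + 2) * (1 / (n + 2) ^ 2) + 1 := by
        rw [Fin.sum_univ_castSucc]
        simp only [Fin.coeSucc_eq_succ, hstep, Fin.last_add_one, sum_const, card_univ,
          Fintype.card_fin, nsmul_eq_mul]
        simp [f, hn]
    _ = (n + 3) / (n + 2) := by
        field_simp
        ring

lemma effRes_cycleGraph_last_zero (n : ℕ) :
    effRes (gw (cycleGraph (n + 3))) (Fin.last (n + 2)) 0 = (n + 2) / (n + 3) := by
  have hadj : (cycleGraph (n + 3)).Adj (Fin.last (n + 2)) 0 := by simp [cycleGraph_adj]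
  have hleast : IsLeast {E | ∃ f : Fin (n + 3) → ℝ, f (Fin.last (n + 2)) = 1 ∧ f 0 = 0 ∧
      E = energy (gw (cycleGraph (n + 3))) f} ((n + 3) / (n + 2)) := by
    refine ⟨⟨_, ?_, by simp, (energy_cycleGraph_val_div n).symm⟩, ?_⟩
    · simp only [Fin.val_last]
      push_cast
      exact div_self (by positivity)
    · rintro _ ⟨f, hfa, hfb, rfl⟩
      have := sq_sub_mul_le_energy_of_reachable_deleteEdges hadj
        (reachable_deleteEdges_last_zero n) f
      rw [hfa, hfb, Fintype.card_fin] at this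
      convert this using 1
      push_cast
      ring
  rw [effRes, hleast.csInf_eq, one_div_div]

lemma effRes_cycleGraph_of_adj {n : ℕ} {a b : Fin (n + 3)} (hab : (cycleGraph (n + 3)).Adj a b) :
    effRes (gw (cycleGraph (n + 3))) a b = (n + 2) / (n + 3) := by
  wlog hba : b - a = 1 generalizing a b
  · rw [effRes_comm]
    exact this hab.symm ((cycleGraph_adj.1 hab).resolve_right hba)
  obtain rfl : b = a + 1 := sub_eq_iff_eq_add'.1 hba
  have hlast : Fin.last (n + 2) + (a + 1) = a := by
    rw [add_comm a, ← add_assoc, Fin.last_add_one, zero_add]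
  have hrot := effRes_comp_equiv (Equiv.addRight (a + 1)) (gw (cycleGraph (n + 3)))
    (Fin.last (n + 2)) 0
  simp only [Equiv.coe_addRight, gw_cycleGraph_add_right, zero_add, hlast] at hrot
  rw [← hrot, effRes_cycleGraph_last_zero]

end SimpleGraph

/-- If `ab` is a non-cut-edge of a connected graph on `n` vertices, then
`R_{ab} ≤ (n-1)/n`, with equality for the `n`-cycle. -/
theorem effRes_le_cycle (n : ℕ) (hn : 3 ≤ n) :
    (∀ (V : Type) [Fintype V], Fintype.card V = n →
      ∀ (G : SimpleGraph V), G.Connected → ∀ a b : V, G.Adj a b →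
        (G.deleteEdges {s(a, b)}).Connected →
        effRes (gw G) a b ≤ ((n : ℝ) - 1) / n) ∧
    (∀ a b : Fin n, (SimpleGraph.cycleGraph n).Adj a b →
      effRes (gw (SimpleGraph.cycleGraph n)) a b = ((n : ℝ) - 1) / n) := by
  refine ⟨fun V _ hcard G _ a b hab hdel => ?_, fun a b hab => ?_⟩
  · rw [← hcard]
    exact SimpleGraph.effRes_gw_le_of_reachable_deleteEdges hab (hdel.preconnected a b)
  · obtain ⟨m, rfl⟩ : ∃ m, n = m + 3 := ⟨n - 3, by omega⟩
    rw [SimpleGraph.effRes_cycleGraph_of_adj hab]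
    push_cast
    ring
end

section
/- Let G be a d-regular graph and ab an edge that is not a cut-edge, and let G' = G minus the edge ab. Then the simple random walks on G' satisfy E_a T_b^{G'} = E_b T_a^{G'} provided E_a T_b = E_b T_a on G. -/
open Finset

/-!
Write `h_t z = E_z T_t` and `ψ_Γ = h_a + h_b`. The first-step equations say that the Laplacian
satisfies `L_Γ h_t = deg - vol(Γ) δ_t`, hence `L_Γ ψ_Γ = 2 deg - vol(Γ) (δ_a + δ_b)`.
Deleting `ab` changes `L` by the Laplacian of the single edge, which kills `ψ_G` exactly when
`ψ_G a = ψ_G b`, i.e. when `E_a T_b = E_b T_a` on `G`; as `deg` and `vol` drop by matching amounts,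
`ψ_G - ψ_G'` is then harmonic on the connected graph `G'`, hence constant, so `ψ_G' a = ψ_G' b`.
The hitting times are finite because the survival probabilities decay geometrically.
-/

open Finset Matrix SimpleGraph

section Survival

variable {V : Type*} [Fintype V] {P : V → V → ℝ} {t x : V}

@[simp]
lemma surv_self (P : V → V → ℝ) (t : V) (n : ℕ) : surv P t n t = 0 := by
  cases n <;> simp [surv]

lemma surv_zero_of_ne (hx : x ≠ t) : surv P t 0 x = 1 := by
  simp [surv, hx]

lemma surv_succ_of_ne (hx : x ≠ t) (n : ℕ) :
    surv P t (n + 1) x = ∑ y, P x y * surv P t n y := by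
  simp [surv, hx]

lemma hitTime_self (P : V → V → ℝ) (t : V) : hitTime P t t = 0 := by
  simp [hitTime]

lemma hitTime_eq_one_add_sum (hs : ∀ y, Summable fun n => surv P t n y) (hx : x ≠ t) :
    hitTime P x t = 1 + ∑ y, P x y * hitTime P y t := by
  rw [hitTime, (hs x).tsum_eq_zero_add, surv_zero_of_ne hx]
  simp only [surv_succ_of_ne hx, hitTime]
  rw [Summable.tsum_finsetSum fun y _ => (hs y).mul_left (P x y)]
  simp only [tsum_mul_left]

variable [DecidableEq V]

lemma surv_nonneg (hP : P ∈ rowStochastic ℝ V) (n : ℕ) (x : V) : 0 ≤ surv P t n x := by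
  induction n generalizing x with
  | zero => by_cases hx : x = t <;> simp [surv, hx]
  | succ n ih =>
    by_cases hx : x = t
    · simp [hx]
    · rw [surv_succ_of_ne hx]
      exact sum_nonneg fun y _ => mul_nonneg (nonneg_of_mem_rowStochastic hP) (ih y)

lemma surv_le_one (hP : P ∈ rowStochastic ℝ V) (n : ℕ) (x : V) : surv P t n x ≤ 1 := by
  induction n generalizing x with
  | zero => by_cases hx : x = t <;> simp [surv, hx]
  | succ n ih =>
    by_cases hx : x = t
    · simp [hx]
    · calc surv P t (n + 1) x = ∑ y, P x y * surv P t n y := surv_succ_of_ne hx n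
        _ ≤ ∑ y, P x y * 1 :=
          sum_le_sum fun y _ => mul_le_mul_of_nonneg_left (ih y) (nonneg_of_mem_rowStochastic hP)
        _ = 1 := by simp [sum_row_of_mem_rowStochastic hP]

lemma surv_add_le (hP : P ∈ rowStochastic ℝ V) {N : ℕ} {ρ : ℝ} (hN : ∀ x, surv P t N x ≤ ρ)
    (m : ℕ) (x : V) : surv P t (N + m) x ≤ ρ * surv P t m x := by
  induction m generalizing x with
  | zero =>
    by_cases hx : x = t
    · simp [hx]
    · simpa [surv_zero_of_ne hx] using hN x
  | succ m ih =>
    by_cases hx : x = t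
    · simp [hx]
    · rw [← add_assoc, surv_succ_of_ne hx, surv_succ_of_ne hx, mul_sum]
      refine sum_le_sum fun y _ => ?_
      calc P x y * surv P t (N + m) y ≤ P x y * (ρ * surv P t m y) :=
            mul_le_mul_of_nonneg_left (ih y) (nonneg_of_mem_rowStochastic hP)
        _ = ρ * (P x y * surv P t m y) := by ring

lemma sum_range_surv_le (hP : P ∈ rowStochastic ℝ V) {N : ℕ} {ρ : ℝ} (hρ : ρ < 1)
    (hN : ∀ x, surv P t N x ≤ ρ) (K : ℕ) (x : V) :
    ∑ n ∈ range K, surv P t n x ≤ N / (1 - ρ) := by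
  have hρ₀ : 0 ≤ ρ := by simpa using hN t
  set T := fun K => ∑ n ∈ range K, surv P t n x
  have hmono : T K ≤ T (N + K) :=
    sum_le_sum_of_subset_of_nonneg (range_subset_range.2 (by omega))
      fun n _ _ => surv_nonneg hP n x
  have hhead : T N ≤ N := by
    simpa using sum_le_sum fun n (_ : n ∈ range N) => surv_le_one hP (t := t) n x
  have htail : ∑ m ∈ range K, surv P t (N + m) x ≤ ρ * T K := by
    rw [mul_sum]
    exact sum_le_sum fun m _ => surv_add_le hP hN m x
  have hsplit : T (N + K) = T N + ∑ m ∈ range K, surv P t (N + m) x := sum_range_add _ _ _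
  -- `T (N + K) ≤ N + ρ T K ≤ N + ρ T (N + K)` and `T K ≤ T (N + K)`
  rw [le_div_iff₀ (by linarith)]
  nlinarith

lemma summable_surv_of_le (hP : P ∈ rowStochastic ℝ V) {N : ℕ} {ρ : ℝ} (hρ : ρ < 1)
    (hN : ∀ x, surv P t N x ≤ ρ) (x : V) : Summable fun n => surv P t n x :=
  summable_of_sum_range_le (fun n => surv_nonneg hP n x) (sum_range_surv_le hP hρ hN · x)

end Survival

section Graph

variable {V : Type*} [Fintype V] [DecidableEq V] {Γ : SimpleGraph V} {P : V → V → ℝ} {t : V}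

lemma surv_lt_one_of_dist_le (hP : P ∈ rowStochastic ℝ V) (hΓ : Γ.Connected)
    (hpos : ∀ x y, Γ.Adj x y → 0 < P x y) (n : ℕ) (x : V) (hn : Γ.dist x t ≤ n) :
    surv P t n x < 1 := by
  induction n generalizing x with
  | zero => simp [hΓ.dist_eq_zero_iff.1 (Nat.le_zero.1 hn)]
  | succ n ih =>
    by_cases hx : x = t
    · simp [hx]
    obtain ⟨w, hw⟩ := (hΓ.preconnected x t).exists_walk_length_eq_dist
    obtain ⟨y, hxy, q, rfl⟩ := Walk.exists_eq_cons_of_ne hx w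
    have hy : Γ.dist y t ≤ n := by
      have := Γ.dist_le q
      simp only [Walk.length_cons] at hw
      omega
    calc surv P t (n + 1) x = ∑ z, P x z * surv P t n z := surv_succ_of_ne hx n
      _ < ∑ z, P x z * 1 := by
        refine sum_lt_sum (fun z _ => mul_le_mul_of_nonneg_left (surv_le_one hP n z)
          (nonneg_of_mem_rowStochastic hP)) ⟨y, mem_univ y, ?_⟩
        exact mul_lt_mul_of_pos_left (ih y hy) (hpos x y hxy)
      _ = 1 := by simp [sum_row_of_mem_rowStochastic hP]

lemma summable_surv_of_connected (hP : P ∈ rowStochastic ℝ V) (hΓ : Γ.Connected)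
    (hpos : ∀ x y, Γ.Adj x y → 0 < P x y) (x : V) : Summable fun n => surv P t n x := by
  set N := univ.sup fun z => Γ.dist z t
  obtain ⟨z₀, -, hz₀⟩ := exists_max_image univ (fun z => surv P t N z) ⟨t, mem_univ t⟩
  have hz₀N : Γ.dist z₀ t ≤ N := le_sup (f := fun z => Γ.dist z t) (mem_univ z₀)
  exact summable_surv_of_le hP (surv_lt_one_of_dist_le hP hΓ hpos N z₀ hz₀N)
    (hz₀ · (mem_univ _)) x

end Graph

lemma gw_eq_adjMatrix {V : Type*} (Γ : SimpleGraph V) [DecidableRel Γ.Adj] :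
    gw Γ = Γ.adjMatrix ℝ := by
  ext x y
  simp only [gw, adjMatrix_apply]
  congr

section SimpleRandomWalk

variable {V : Type*} [Fintype V] {Γ : SimpleGraph V} [DecidableRel Γ.Adj]

lemma condAt_gw (x : V) : condAt (gw Γ) x = Γ.degree x := by
  simp [condAt, gw_eq_adjMatrix, degree_eq_sum_if_adj]

lemma step_gw_pos {x y : V} (h : Γ.Adj x y) : 0 < step (gw Γ) x y := by
  have : 0 < Γ.degree x := Γ.degree_pos_iff_exists_adj x |>.2 ⟨y, h⟩
  rw [step, condAt_gw]
  simp [gw_eq_adjMatrix, h, this]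

variable [DecidableEq V]

lemma step_gw_mem_rowStochastic (hdeg : ∀ x, 0 < Γ.degree x) :
    step (gw Γ) ∈ rowStochastic ℝ V := by
  refine mem_rowStochastic_iff_sum.2 ⟨fun x y => ?_, fun x => ?_⟩
  · by_cases h : Γ.Adj x y
    · exact (step_gw_pos h).le
    · simp [step, gw_eq_adjMatrix, h]
  · have : (Γ.degree x : ℝ) ≠ 0 := by exact_mod_cast (hdeg x).ne'
    simp only [step]
    rw [← sum_div, ← condAt, condAt_gw, div_self this]

lemma summable_surv_step_gw (hΓ : Γ.Connected) [Nontrivial V] (t x : V) :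
    Summable fun n => surv (step (gw Γ)) t n x :=
  summable_surv_of_connected
    (step_gw_mem_rowStochastic fun x => hΓ.preconnected.degree_pos_of_nontrivial x)
    hΓ (fun _ _ => step_gw_pos) x

end SimpleRandomWalk

section Laplacian

variable {V : Type*} [Fintype V] [DecidableEq V] {Γ : SimpleGraph V} [DecidableRel Γ.Adj]

lemma sum_lapMatrix_mulVec (u : V → ℝ) : ∑ x, (Γ.lapMatrix ℝ *ᵥ u) x = 0 := by
  have h := dotProduct_mulVec (fun _ => (1 : ℝ)) (Γ.lapMatrix ℝ) u
  rw [← mulVec_transpose, (isSymm_lapMatrix ℝ Γ).eq, lapMatrix_mulVec_const_eq_zero,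
    zero_dotProduct] at h
  simpa [dotProduct] using h

lemma lapMatrix_mulVec_hitTime_of_ne (hΓ : Γ.Connected) [Nontrivial V] {t x : V} (hx : x ≠ t) :
    (Γ.lapMatrix ℝ *ᵥ fun z => hitTime (step (gw Γ)) z t) x = Γ.degree x := by
  have hdeg : (Γ.degree x : ℝ) ≠ 0 := by
    exact_mod_cast (hΓ.preconnected.degree_pos_of_nontrivial x).ne'
  rw [lapMatrix, sub_mulVec, Pi.sub_apply, degMatrix_mulVec_apply,
    hitTime_eq_one_add_sum (summable_surv_step_gw hΓ t) hx]
  simp only [step, condAt_gw]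
  simp only [gw_eq_adjMatrix, mulVec, dotProduct, div_mul_eq_mul_div, ← sum_div]
  field_simp
  ring

lemma lapMatrix_mulVec_hitTime (hΓ : Γ.Connected) [Nontrivial V] (t x : V) :
    (Γ.lapMatrix ℝ *ᵥ fun z => hitTime (step (gw Γ)) z t) x
      = Γ.degree x - if x = t then ∑ z, (Γ.degree z : ℝ) else 0 := by
  by_cases hx : x = t
  · subst hx
    have hsum := sum_lapMatrix_mulVec (Γ := Γ) fun z => hitTime (step (gw Γ)) z x
    rw [← add_sum_erase _ _ (mem_univ x),
      sum_congr rfl fun z hz => lapMatrix_mulVec_hitTime_of_ne hΓ (ne_of_mem_erase hz)] at hsum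
    rw [if_pos rfl, ← add_sum_erase _ _ (mem_univ x)]
    linarith
  · rw [lapMatrix_mulVec_hitTime_of_ne hΓ hx, if_neg hx, sub_zero]

variable (Γ) in
noncomputable def hitTimeSum (a b z : V) : ℝ :=
  hitTime (step (gw Γ)) z a + hitTime (step (gw Γ)) z b

lemma lapMatrix_mulVec_hitTimeSum (hΓ : Γ.Connected) [Nontrivial V] (a b x : V) :
    (Γ.lapMatrix ℝ *ᵥ hitTimeSum Γ a b) x = 2 * Γ.degree x
      - (if x = a then ∑ z, (Γ.degree z : ℝ) else 0)
      - (if x = b then ∑ z, (Γ.degree z : ℝ) else 0) := by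
  change (Γ.lapMatrix ℝ *ᵥ ((fun z => hitTime (step (gw Γ)) z a)
    + fun z => hitTime (step (gw Γ)) z b)) x = _
  rw [mulVec_add, Pi.add_apply, lapMatrix_mulVec_hitTime hΓ, lapMatrix_mulVec_hitTime hΓ]
  ring

end Laplacian

lemma adjMatrix_eq_adjMatrix_deleteEdges_add {V : Type*} [DecidableEq V] {G : SimpleGraph V}
    [DecidableRel G.Adj] {a b : V} (hab : G.Adj a b) :
    G.adjMatrix ℝ = (G.deleteEdges {s(a, b)}).adjMatrix ℝ + (single a b 1 + single b a 1) := by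
  ext x y
  by_cases he : s(x, y) = s(a, b)
  · rcases Sym2.eq_iff.1 he with ⟨rfl, rfl⟩ | ⟨rfl, rfl⟩ <;>
      simp [hab, hab.symm, hab.ne, hab.ne.symm]
  · obtain ⟨hab', hba'⟩ : ¬(a = x ∧ b = y) ∧ ¬(b = x ∧ a = y) := by
      rw [Sym2.eq_iff] at he; tauto
    simp [he, hab', hba']

section DeleteEdge

variable {V : Type*} [Fintype V] [DecidableEq V] {G : SimpleGraph V} [DecidableRel G.Adj]
  {a b : V}

lemma adjMatrix_mulVec_apply_eq_deleteEdges_add (hab : G.Adj a b) (u : V → ℝ) (x : V) :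
    (G.adjMatrix ℝ *ᵥ u) x = ((G.deleteEdges {s(a, b)}).adjMatrix ℝ *ᵥ u) x
      + (if x = a then u b else 0) + (if x = b then u a else 0) := by
  rw [adjMatrix_eq_adjMatrix_deleteEdges_add hab, add_mulVec, add_mulVec, single_mulVec,
    single_mulVec]
  simp [Function.update_apply, add_assoc]

lemma degree_eq_degree_deleteEdges_add (hab : G.Adj a b) (x : V) :
    (G.degree x : ℝ) = (G.deleteEdges {s(a, b)}).degree x
      + (if x = a then 1 else 0) + (if x = b then 1 else 0) := by
  simpa using adjMatrix_mulVec_apply_eq_deleteEdges_add hab (Function.const V 1) x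

lemma lapMatrix_mulVec_apply_eq_deleteEdges_add (hab : G.Adj a b) (u : V → ℝ) (x : V) :
    (G.lapMatrix ℝ *ᵥ u) x = ((G.deleteEdges {s(a, b)}).lapMatrix ℝ *ᵥ u) x
      + (if x = a then u a - u b else 0) + (if x = b then u b - u a else 0) := by
  simp only [lapMatrix, sub_mulVec, Pi.sub_apply, degMatrix_mulVec_apply,
    degree_eq_degree_deleteEdges_add hab, adjMatrix_mulVec_apply_eq_deleteEdges_add hab]
  split_ifs <;> subst_vars <;> ring

lemma lapMatrix_deleteEdges_mulVec_hitTimeSum_sub_eq_zero (hab : G.Adj a b)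
    (hcut : (G.deleteEdges {s(a, b)}).Connected) (hsym : hitTimeSum G a b a = hitTimeSum G a b b) :
    (G.deleteEdges {s(a, b)}).lapMatrix ℝ *ᵥ
      (hitTimeSum G a b - hitTimeSum (G.deleteEdges {s(a, b)}) a b) = 0 := by
  have hG : G.Connected := hcut.mono (deleteEdges_le _)
  have : Nontrivial V := ⟨a, b, hab.ne⟩
  have hvol : ∑ z, (G.degree z : ℝ) = ∑ z, ((G.deleteEdges {s(a, b)}).degree z : ℝ) + 2 := by
    simp [degree_eq_degree_deleteEdges_add hab, sum_add_distrib]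
    ring
  ext x
  have hG_x := lapMatrix_mulVec_apply_eq_deleteEdges_add hab (hitTimeSum G a b) x
  rw [lapMatrix_mulVec_hitTimeSum hG, hsym, hvol, degree_eq_degree_deleteEdges_add hab x] at hG_x
  rw [mulVec_sub, Pi.sub_apply, lapMatrix_mulVec_hitTimeSum hcut, Pi.zero_apply]
  split_ifs at hG_x ⊢ <;> subst_vars <;> linarith

end DeleteEdge

theorem regular_delete_edge_symm_general {V : Type*} [Fintype V]
    (G : SimpleGraph V)
    (a b : V) (hab : G.Adj a b)
    (hcut : (G.deleteEdges {s(a, b)}).Connected)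
    (hsym : hitTime (step (gw G)) a b = hitTime (step (gw G)) b a) :
    hitTime (step (gw (G.deleteEdges {s(a, b)}))) a b
      = hitTime (step (gw (G.deleteEdges {s(a, b)}))) b a := by
  classical
  have hsym' : hitTimeSum G a b a = hitTimeSum G a b b := by
    simpa [hitTimeSum, hitTime_self] using hsym
  have hconst := (lapMatrix_mulVec_eq_zero_iff_forall_reachable _).1
    (lapMatrix_deleteEdges_mulVec_hitTimeSum_sub_eq_zero hab hcut hsym') a b (hcut.preconnected a b)
  simp only [Pi.sub_apply, hitTimeSum, hitTime_self] at hconst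
  linarith

/-- If `G` is `d`-regular, `ab` is not a cut-edge and hitting times between `a`
and `b` are symmetric on `G`, then they remain symmetric after deleting the
edge `ab`. -/
theorem regular_delete_edge_symm {V : Type*} [Fintype V] [DecidableEq V]
    (G : SimpleGraph V) [DecidableRel G.Adj] (hconn : G.Connected)
    (d : ℕ) (hreg : G.IsRegularOfDegree d)
    (a b : V) (hab : G.Adj a b)
    (hcut : (G.deleteEdges {s(a, b)}).Connected)
    (hsym : hitTime (step (gw G)) a b = hitTime (step (gw G)) b a) :
    hitTime (step (gw (G.deleteEdges {s(a, b)}))) a b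
      = hitTime (step (gw (G.deleteEdges {s(a, b)}))) b a :=
  regular_delete_edge_symm_general G a b hab hcut hsym
end
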